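/- arXiv:1609.04176 — 2 statements merged into one kernel-verified Lean document; each statement's English description precedes it below -/
import Mathlib

section
/- For every RB-template P (in which each letter of Σ_rdz labels at most one edge), the set exec_fin(P) of finite executions of the induced RB-system, viewed as a language of finite words over the alphabet R of edges of P, is a regular language: it is recognized by the nondeterministic finite automaton A_P^fin whose state set is the state set S^⊸ of the reachability-unwinding P^⊸ (of size at most |S|·2^{|S|}), whose initial states are I^⊸, whose every state is accepting, and whose transitions are (s, (s^◦,σ,t^◦), t) for every edge (s,σ,t) of P^⊸. -/
/-! ### Core definitions: RB-templates and RB-systems -/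

/-- Edge labels: a rendezvous letter `a_j` (an action together with an index in `[k]`),
or the broadcast letter `𝔟` (represented by `Sum.inr ()`). -/
abbrev Lab (k : ℕ) (A : Type) := (A × Fin k) ⊕ Unit

/-- Edges of a labeled transition system over states `S`. -/
abbrev EdgeT (k : ℕ) (A S : Type) := S × Lab k A × S

/-- An RB-template: a set of initial states and a set of labeled edges. -/
structure RBTemplate (k : ℕ) (A : Type) (S : Type) where
  I : Set S
  R : Set (EdgeT k A S)

/-- Broadcast totality: every state has an outgoing broadcast edge. -/
def RBTemplate.BTotal {k : ℕ} {A S : Type} (P : RBTemplate k A S) : Prop :=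
  ∀ s : S, ∃ t : S, (s, Sum.inr (), t) ∈ P.R

/-- Each rendezvous letter labels at most one edge. -/
def RBTemplate.UniqLab {k : ℕ} {A S : Type} (P : RBTemplate k A S) : Prop :=
  ∀ (ς : A × Fin k) (s t s' t' : S),
    (s, Sum.inl ς, t) ∈ P.R → (s', Sum.inl ς, t') ∈ P.R → s = s' ∧ t = t'

/-- Synchronization label of a global transition of a system whose processes are
indexed by `ι`: either a broadcast, or a `k`-wise rendezvous on action `a` by the
processes `procs 0, …, procs (k-1)`. -/
inductive Sync (k : ℕ) (A : Type) (ι : Type) where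
  | bcast : Sync k A ι
  | rdz (a : A) (procs : Fin k → ι) : Sync k A ι

/-- `(f, σ, g)` is a global transition of the system with processes indexed by `ι`. -/
def RBTrans {k : ℕ} {A S : Type} (P : RBTemplate k A S) {ι : Type}
    (f : ι → S) (σ : Sync k A ι) (g : ι → S) : Prop :=
  match σ with
  | .bcast => ∀ i, (f i, Sum.inr (), g i) ∈ P.R
  | .rdz a procs =>
      Function.Injective procs ∧
      (∀ j : Fin k, (f (procs j), Sum.inl (a, j), g (procs j)) ∈ P.R) ∧
      (∀ i, (∀ j, procs j ≠ i) → g i = f i)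

/-- Process `i` moves in a transition with synchronization label `σ`. -/
def Sync.Moved {k : ℕ} {A ι : Type} (σ : Sync k A ι) (i : ι) : Prop :=
  match σ with
  | .bcast => True
  | .rdz _ procs => ∃ j, procs j = i

/-- The edge of the template taken by process `i` in the global transition `(f, σ, g)`
(`none` if `i` does not move). -/
noncomputable def edgeAt {k : ℕ} {A S ι : Type} (f g : ι → S) (σ : Sync k A ι) (i : ι) :
    Option (EdgeT k A S) :=
  match σ with
  | .bcast => some (f i, Sum.inr (), g i)
  | .rdz a procs =>
      letI := Classical.propDecidable (∃ j, procs j = i)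
      if h : ∃ j, procs j = i then some (f i, Sum.inl (a, Classical.choose h), g i)
      else none

/-- A finite path of the RB-system with processes indexed by `ι`:
a length, configurations `conf 0, …, conf len`, and transitions between them. -/
structure FinPath {k : ℕ} {A S : Type} (P : RBTemplate k A S) (ι : Type) where
  len : ℕ
  conf : ℕ → ι → S
  sync : ℕ → Sync k A ι
  valid : ∀ t, t < len → RBTrans P (conf t) (sync t) (conf (t + 1))

/-- An infinite path of the RB-system with processes indexed by `ι`. -/
structure InfPath {k : ℕ} {A S : Type} (P : RBTemplate k A S) (ι : Type) where
  conf : ℕ → ι → S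
  sync : ℕ → Sync k A ι
  valid : ∀ t, RBTrans P (conf t) (sync t) (conf (t + 1))

/-- A finite run: a finite path starting at an initial configuration. -/
def FinPath.IsRun {k : ℕ} {A S : Type} {P : RBTemplate k A S} {ι : Type}
    (p : FinPath P ι) : Prop :=
  ∀ i, p.conf 0 i ∈ P.I

/-- An infinite run: an infinite path starting at an initial configuration. -/
def InfPath.IsRun {k : ℕ} {A S : Type} {P : RBTemplate k A S} {ι : Type}
    (p : InfPath P ι) : Prop :=
  ∀ i, p.conf 0 i ∈ P.I

/-- The projection of a finite path onto process `i`: the sequence of edges taken by `i`. -/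
noncomputable def FinPath.proj {k : ℕ} {A S : Type} {P : RBTemplate k A S} {ι : Type}
    (p : FinPath P ι) (i : ι) : List (EdgeT k A S) :=
  (List.range p.len).filterMap (fun t => edgeAt (p.conf t) (p.conf (t + 1)) (p.sync t) i)

/-- The number of broadcast transitions on a finite path. -/
noncomputable def FinPath.bcasts {k : ℕ} {A S : Type} {P : RBTemplate k A S} {ι : Type}
    (p : FinPath P ι) : ℕ :=
  Nat.card {t : ℕ // t < p.len ∧ p.sync t = Sync.bcast}

/-- The set of finite executions of the RB-system induced by `P`: projections onto
process `0` of the finite runs of the systems `P^n`, `n ∈ ℕ`. -/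
def execFin {k : ℕ} {A S : Type} (P : RBTemplate k A S) : Set (List (EdgeT k A S)) :=
  {w | ∃ n : ℕ, ∃ p : FinPath P (Fin (n + 1)), p.IsRun ∧ p.proj 0 = w}

/-- The set of infinite executions of the RB-system induced by `P`: infinite projections
onto process `0` of the runs of the systems `P^n`, `n ∈ ℕ`.  Here `ι` enumerates, in
increasing order, exactly the transitions in which process `0` moves. -/
def execInf {k : ℕ} {A S : Type} (P : RBTemplate k A S) : Set (ℕ → EdgeT k A S) :=
  {w | ∃ n : ℕ, ∃ p : InfPath P (Fin (n + 1)), p.IsRun ∧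
    ∃ ι : ℕ → ℕ, StrictMono ι ∧
      (∀ t, (p.sync t).Moved 0 ↔ ∃ m, ι m = t) ∧
      (∀ m, edgeAt (p.conf (ι m)) (p.conf (ι m + 1)) (p.sync (ι m)) 0 = some (w m))}

/-! ### The reachability-unwinding -/

/-- `X` is closed under the saturation rule for the set `J` of initial states. -/
def SatClosed {k : ℕ} {A S : Type} (P : RBTemplate k A S) (J : Set S) (X : Set S) : Prop :=
  J ⊆ X ∧ ∀ (s : S) (a : A) (_h : Fin k) (t : S), s ∈ X → (s, Sum.inl (a, _h), t) ∈ P.R →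
    (∀ l : Fin k, ∃ s' t' : S, s' ∈ X ∧ (s', Sum.inl (a, l), t') ∈ P.R) → t ∈ X

/-- The saturated state set `S_i` generated from the set `J` of initial states:
the least set containing `J` and closed under the saturation rule. -/
def SatS {k : ℕ} {A S : Type} (P : RBTemplate k A S) (J : Set S) : Set S :=
  ⋂₀ {X | SatClosed P J X}

/-- The saturated edge set `R_i` generated from the set `J` of initial states. -/
def SatR {k : ℕ} {A S : Type} (P : RBTemplate k A S) (J : Set S) : Set (EdgeT k A S) :=
  {e | ∃ (s : S) (a : A) (h : Fin k) (t : S), e = (s, Sum.inl (a, h), t) ∧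
    s ∈ SatS P J ∧ e ∈ P.R ∧
    ∀ l : Fin k, ∃ s' t' : S, s' ∈ SatS P J ∧ (s', Sum.inl (a, l), t') ∈ P.R}

/-- The initial-state sets `I_i` of the components `P_i` of the reachability-unwinding
(each component `P_i = (S_i, I_i, R_i)` is completely determined by `I_i`, via
`S_i = SatS P (compI P i)` and `R_i = SatR P (compI P i)`). -/
def compI {k : ℕ} {A S : Type} (P : RBTemplate k A S) : ℕ → Set S
  | 0 => P.I
  | i + 1 => {s | ∃ h : S, h ∈ SatS P (compI P i) ∧ (h, Sum.inr (), s) ∈ P.R}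

/-- `(n, m)` is the (least) lasso pair of the unwinding construction: the components
`P_0, …, P_m` are pairwise distinct and `P_n = P_{m+1}`.  The prefix length is `n` and
the period is `r = m + 1 - n`. -/
def IsLasso {k : ℕ} {A S : Type} (P : RBTemplate k A S) (n m : ℕ) : Prop :=
  n ≤ m ∧ compI P n = compI P (m + 1) ∧
    ∀ i j : ℕ, i < j → j ≤ m → compI P i ≠ compI P j

/-- The component number associated with `i`, for the lasso pair `(n, m)`. -/
def compAt (n m i : ℕ) : ℕ := if i ≤ m then i else n + (i - n) % (m + 1 - n)

/-- The reachability-unwinding `P^⊸` of `P`, for the lasso pair `(n, m)`: states are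
pairs (state of `P`, component number). -/
def unwind {k : ℕ} {A S : Type} (P : RBTemplate k A S) (n m : ℕ) :
    RBTemplate k A (S × ℕ) where
  I := {x | x.1 ∈ P.I ∧ x.2 = 0}
  R := {e | (∃ (s t : S) (ς : A × Fin k) (i : ℕ), i ≤ m ∧
              e = ((s, i), Sum.inl ς, (t, i)) ∧ (s, Sum.inl ς, t) ∈ SatR P (compI P i)) ∨
            (∃ (s t : S) (i : ℕ), i ≤ m ∧
              e = ((s, i), Sum.inr (), (t, compAt n m (i + 1))) ∧
              s ∈ SatS P (compI P i) ∧ (s, Sum.inr (), t) ∈ P.R)}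

/-- Erasing the component numbers from an edge of the unwinding. -/
def erE {k : ℕ} {A S : Type} (e : EdgeT k A (S × ℕ)) : EdgeT k A S :=
  (e.1.1, e.2.1, e.2.2.1)

/-- The NFA `A_P^fin`: its states are the states of the template `P^⊸`, its initial
states are those of `P^⊸`, every state is accepting, and for every edge `(s, σ, t)`
of `P^⊸` there is a transition from `s` to `t` reading the letter `(s^◦, σ, t^◦)`
(the edge with component numbers erased). -/
def APfin {k : ℕ} {A S : Type} (P : RBTemplate k A S) (n₀ m : ℕ) :
    NFA (EdgeT k A S) (S × ℕ) where
  step := fun q e =>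
    {q' | (q, e.2.1, q') ∈ (unwind P n₀ m).R ∧ e.1 = q.1 ∧ e.2.2 = q'.1}
  start := (unwind P n₀ m).I
  accept := Set.univ

/-!
Along any run, after `b` broadcasts every process lies in `S_b`: rendezvous stay inside the
saturated set, broadcasts move into `I_{b+1}`. The sequence `I_i` is eventually periodic, so
`S_b` is the state set of the component `comp b` of `P^⊸`, and the projection of a run onto a
process is a path of `A_P^fin`.

Conversely, runs with equally many broadcasts can be executed side by side (rendezvous
interleaved, broadcasts performed jointly). Hence by induction every state of `S_j` is occupied
after `j` broadcasts in some large enough system, which supplies the partners for any rendezvous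
edge of `P_j`, and every path of `A_P^fin` is the projection of a run.

Regularity then follows by Myhill–Nerode, since the reachable states of `A_P^fin` have component
numbers at most `m`.
-/

open Relation

theorem NFA.accepts_isRegular_of_finite {α σ : Type} (M : NFA α σ) {T : Set σ}
    (hT : T.Finite) (hstart : M.start ⊆ T) (hstep : ∀ q a, M.step q a ⊆ T) :
    M.accepts.IsRegular := by
  have heval : ∀ x, M.eval x ⊆ T := by
    intro x
    induction x using List.reverseRecOn with
    | nil => exact hstart
    | append_singleton x a _ =>
      rw [NFA.eval_append_singleton]
      intro q hq
      obtain ⟨q₀, -, hq⟩ := NFA.mem_stepSet.mp hq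
      exact hstep q₀ a hq
  have hquot : M.accepts.leftQuotient = M.acceptsFrom ∘ M.eval := by
    ext x y
    exact NFA.append_mem_acceptsFrom M
  refine .of_finite_range_leftQuotient ((hT.powerset.image M.acceptsFrom).subset ?_)
  rw [hquot, Set.range_comp]
  exact Set.image_mono (Set.range_subset_iff.mpr heval)

section Unwinding

variable {k : ℕ} {A S : Type} {P : RBTemplate k A S}

variable (P) in
def nextCompI (J : Set S) : Set S :=
  {s | ∃ h : S, h ∈ SatS P J ∧ (h, Sum.inr (), s) ∈ P.R}

theorem compI_add (i d : ℕ) : compI P (i + d) = (nextCompI P)^[d] (compI P i) := by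
  induction d with
  | zero => rfl
  | succ d ih => rw [Function.iterate_succ_apply', ← ih]; rfl

theorem compI_congr_succ {i i' : ℕ} (h : compI P i = compI P i') :
    compI P (i + 1) = compI P (i' + 1) := by
  rw [compI_add i 1, compI_add i' 1, h]

theorem compAt_le {n m : ℕ} (hnm : n ≤ m) (i : ℕ) : compAt n m i ≤ m := by
  unfold compAt
  split_ifs with hi
  · exact hi
  · have := Nat.mod_lt (i - n) (show 0 < m + 1 - n by omega)
    omega

theorem IsLasso.compI_compAt {n m : ℕ} (hL : IsLasso P n m) (i : ℕ) :
    compI P (compAt n m i) = compI P i := by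
  obtain ⟨hnm, hloop, -⟩ := hL
  unfold compAt
  split_ifs with hi
  · rfl
  have hper : Function.IsPeriodicPt (nextCompI P) (m + 1 - n) (compI P n) := by
    rw [Function.IsPeriodicPt, Function.IsFixedPt, ← compI_add, hloop]
    congr 1
    omega
  rw [compI_add, hper.iterate_mod_apply, ← compI_add]
  congr 1
  omega

theorem IsLasso.succ_le_two_pow [Fintype S] {n m : ℕ} (hL : IsLasso P n m) :
    m + 1 ≤ 2 ^ Fintype.card S := by
  have hinj : Function.Injective (fun i : Fin (m + 1) => compI P i) := by
    intro i j hij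
    by_contra hne
    rcases lt_or_gt_of_ne (Fin.val_ne_of_ne hne) with h | h
    · exact hL.2.2 i j h (by omega) hij
    · exact hL.2.2 j i h (by omega) hij.symm
  simpa using Fintype.card_le_of_injective _ hinj

theorem subset_satS (J : Set S) : J ⊆ SatS P J :=
  fun _ hs _ hX => hX.1 hs

theorem satS_subset_of_satClosed {J X : Set S} (h : SatClosed P J X) : SatS P J ⊆ X :=
  Set.sInter_subset_of_mem h

theorem satClosed_satS (J : Set S) : SatClosed P J (SatS P J) :=
  ⟨subset_satS J, fun s a h t hs he hpart X hX =>
    hX.2 s a h t (hs X hX) he fun l =>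
      let ⟨s', t', hs', he'⟩ := hpart l
      ⟨s', t', hs' X hX, he'⟩⟩

theorem unwind_states_card_le [Fintype S] {n m : ℕ} (hL : IsLasso P n m) :
    Nat.card {x : S × ℕ // x.2 ≤ m ∧ x.1 ∈ SatS P (compI P x.2)} ≤
      Fintype.card S * 2 ^ Fintype.card S := by
  have hinj : Function.Injective
      (fun x : {x : S × ℕ // x.2 ≤ m ∧ x.1 ∈ SatS P (compI P x.2)} =>
        (x.1.1, (⟨x.1.2, Nat.lt_succ_of_le x.2.1⟩ : Fin (m + 1)))) := by
    rintro ⟨⟨s, i⟩, _⟩ ⟨⟨s', i'⟩, _⟩ h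
    simp only [Prod.mk.injEq, Fin.mk.injEq] at h
    simp [h.1, h.2]
  calc Nat.card {x : S × ℕ // x.2 ≤ m ∧ x.1 ∈ SatS P (compI P x.2)}
      ≤ Nat.card (S × Fin (m + 1)) := Nat.card_le_card_of_injective _ hinj
    _ = Fintype.card S * (m + 1) := by simp [Nat.card_eq_fintype_card]
    _ ≤ Fintype.card S * 2 ^ Fintype.card S := Nat.mul_le_mul_left _ hL.succ_le_two_pow

end Unwinding

theorem List.filterMap_range_succ {α : Type*} (F : ℕ → Option α) (t : ℕ) :
    (List.range (t + 1)).filterMap F = (List.range t).filterMap F ++ (F t).toList := by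
  rw [List.range_succ, List.filterMap_append]
  rcases h : F t <;> simp [h]

section EdgeAt

variable {k : ℕ} {A S ι : Type}

theorem edgeAt_rdz_of_eq {f g : ι → S} {a : A} {procs : Fin k → ι}
    (hinj : Function.Injective procs) {l : Fin k} {x : ι} (hx : procs l = x) :
    edgeAt f g (.rdz a procs) x = some (f x, Sum.inl (a, l), g x) := by
  have hex : ∃ j, procs j = x := ⟨l, hx⟩
  simp only [edgeAt, dif_pos hex, hinj ((Classical.choose_spec hex).trans hx.symm)]

theorem edgeAt_rdz_of_forall_ne {f g : ι → S} {a : A} {procs : Fin k → ι} {x : ι}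
    (hx : ∀ j, procs j ≠ x) : edgeAt f g (.rdz a procs) x = none := by
  simp [edgeAt, hx]

theorem edgeAt_rdz_comp {ι' : Type} {u : ι → ι'} (hu : Function.Injective u)
    {procs : Fin k → ι} (hinj : Function.Injective procs) (F G : ι' → S) (a : A) (i : ι) :
    edgeAt F G (.rdz a (u ∘ procs)) (u i) = edgeAt (F ∘ u) (G ∘ u) (.rdz a procs) i := by
  by_cases hx : ∃ j, procs j = i
  · obtain ⟨j, hj⟩ := hx
    rw [edgeAt_rdz_of_eq (hu.comp hinj) (congrArg u hj), edgeAt_rdz_of_eq hinj hj]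
    rfl
  · push Not at hx
    rw [edgeAt_rdz_of_forall_ne (procs := u ∘ procs) fun j hj => hx j (hu hj),
      edgeAt_rdz_of_forall_ne hx]

end EdgeAt

section Soundness

variable {k : ℕ} {A S ι : Type} {P : RBTemplate k A S} {n₀ m : ℕ}

def Sync.nextComp (n₀ m : ℕ) : Sync k A ι → ℕ → ℕ
  | .bcast, c => compAt n₀ m (c + 1)
  | .rdz _ _, c => c

theorem Sync.nextComp_le (hnm : n₀ ≤ m) (σ : Sync k A ι) {c : ℕ} (hc : c ≤ m) :
    σ.nextComp n₀ m c ≤ m := by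
  cases σ
  · exact compAt_le hnm _
  · exact hc

theorem RBTrans.mem_satS_nextComp (hL : IsLasso P n₀ m) {f g : ι → S} {σ : Sync k A ι}
    (ht : RBTrans P f σ g) {c : ℕ} (hf : ∀ x, f x ∈ SatS P (compI P c)) (x : ι) :
    g x ∈ SatS P (compI P (σ.nextComp n₀ m c)) := by
  cases σ with
  | bcast =>
    rw [Sync.nextComp, hL.compI_compAt]
    exact subset_satS _ ⟨f x, hf x, ht x⟩
  | rdz a procs =>
    obtain ⟨-, hedge, hidle⟩ := ht
    by_cases hx : ∃ j, procs j = x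
    · obtain ⟨j, rfl⟩ := hx
      exact (satClosed_satS _).2 _ a j _ (hf _) (hedge j)
        fun l => ⟨_, _, hf (procs l), hedge l⟩
    · push Not at hx
      rw [hidle x hx]
      exact hf x

theorem RBTrans.mem_evalFrom_APfin {f g : ι → S} {σ : Sync k A ι}
    (ht : RBTrans P f σ g) {c : ℕ} (hc : c ≤ m) (hf : ∀ x, f x ∈ SatS P (compI P c))
    (i : ι) :
    (g i, σ.nextComp n₀ m c) ∈
      (APfin P n₀ m).evalFrom {(f i, c)} (edgeAt f g σ i).toList := by
  cases σ with
  | bcast =>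
    rw [edgeAt, Option.toList_some, NFA.evalFrom_singleton, NFA.stepSet_singleton]
    exact ⟨Or.inr ⟨f i, g i, c, hc, rfl, hf i, ht i⟩, rfl, rfl⟩
  | rdz a procs =>
    obtain ⟨hinj, hedge, hidle⟩ := ht
    by_cases hx : ∃ j, procs j = i
    · obtain ⟨j, hj⟩ := hx
      rw [edgeAt_rdz_of_eq hinj hj, Option.toList_some, NFA.evalFrom_singleton,
        NFA.stepSet_singleton]
      have hsat : (f i, Sum.inl (a, j), g i) ∈ SatR P (compI P c) :=
        ⟨f i, a, j, g i, rfl, hf i, hj ▸ hedge j, fun l => ⟨_, _, hf (procs l), hedge l⟩⟩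
      exact ⟨Or.inl ⟨f i, g i, (a, j), c, hc, rfl, hsat⟩, rfl, rfl⟩
    · push Not at hx
      rw [edgeAt_rdz_of_forall_ne hx, hidle i hx]
      exact rfl

def FinPath.compTrack (p : FinPath P ι) (n₀ m : ℕ) : ℕ → ℕ
  | 0 => 0
  | t + 1 => (p.sync t).nextComp n₀ m (p.compTrack n₀ m t)

noncomputable def FinPath.projPrefix (p : FinPath P ι) (i : ι) (t : ℕ) : List (EdgeT k A S) :=
  (List.range t).filterMap fun u => edgeAt (p.conf u) (p.conf (u + 1)) (p.sync u) i

theorem FinPath.IsRun.proj_mem_accepts (hL : IsLasso P n₀ m) {p : FinPath P ι}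
    (hrun : p.IsRun) (i : ι) : p.proj i ∈ (APfin P n₀ m).accepts := by
  have inv : ∀ t ≤ p.len, p.compTrack n₀ m t ≤ m ∧
      (∀ x, p.conf t x ∈ SatS P (compI P (p.compTrack n₀ m t))) ∧
      (p.conf t i, p.compTrack n₀ m t) ∈ (APfin P n₀ m).eval (p.projPrefix i t) := by
    intro t
    induction t with
    | zero => exact fun _ => ⟨Nat.zero_le m, fun x => subset_satS _ (hrun x), hrun i, rfl⟩
    | succ t ih =>
      intro ht
      obtain ⟨hc, hsat, heval⟩ := ih (by omega)
      have htrans := p.valid t (by omega)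
      refine ⟨(p.sync t).nextComp_le hL.1 hc, htrans.mem_satS_nextComp hL hsat, ?_⟩
      rw [FinPath.projPrefix, List.filterMap_range_succ, NFA.eval, NFA.evalFrom_append,
        NFA.mem_evalFrom_iff_exists]
      exact ⟨_, heval, htrans.mem_evalFrom_APfin hc hsat i⟩
  exact ⟨_, trivial, (inv p.len le_rfl).2.2⟩

theorem mem_accepts_of_mem_execFin (hL : IsLasso P n₀ m) {w : List (EdgeT k A S)}
    (hw : w ∈ execFin P) : w ∈ (APfin P n₀ m).accepts := by
  obtain ⟨n, p, hrun, rfl⟩ := hw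
  exact hrun.proj_mem_accepts hL 0

end Soundness

section Completeness

abbrev TracedState (k : ℕ) (A S : Type) : Type := S × List (EdgeT k A S)

variable {k : ℕ} {A S : Type} {P : RBTemplate k A S}

variable (P) in
def TracedStep {ι : Type} (σ : Sync k A ι) (c d : ι → TracedState k A S) : Prop :=
  RBTrans P (fun i => (c i).1) σ (fun i => (d i).1) ∧
    ∀ i, (d i).2 = (c i).2 ++ (edgeAt (fun i => (c i).1) (fun i => (d i).1) σ i).toList

variable (P) in
def RdzStep {ι : Type} (c d : ι → TracedState k A S) : Prop :=
  ∃ a procs, TracedStep P (.rdz a procs) c d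

variable (P) in
/-- `TracedReach P j c`: some run with exactly `j` broadcasts ends in the states `(c i).1`,
and `(c i).2` is the sequence of edges taken by process `i` along it. -/
def TracedReach {ι : Type} : ℕ → (ι → TracedState k A S) → Prop
  | 0, c => ∃ c₀, (∀ i, (c₀ i).1 ∈ P.I ∧ (c₀ i).2 = []) ∧
      ReflTransGen (RdzStep P) c₀ c
  | j + 1, c => ∃ c₁ c₂, TracedReach j c₁ ∧ TracedStep P .bcast c₁ c₂ ∧
      ReflTransGen (RdzStep P) c₂ c

theorem tracedStep_bcast_iff {ι : Type} {c d : ι → TracedState k A S} :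
    TracedStep P .bcast c d ↔ ∀ i, ((c i).1, Sum.inr (), (d i).1) ∈ P.R ∧
      (d i).2 = (c i).2 ++ [((c i).1, Sum.inr (), (d i).1)] :=
  forall_and.symm

theorem TracedStep.embed_rdz {ι ι' : Type} {u : ι → ι'} (hu : Function.Injective u)
    {a : A} {procs : Fin k → ι} {C D : ι' → TracedState k A S}
    (h : TracedStep P (.rdz a procs) (C ∘ u) (D ∘ u))
    (hout : ∀ x, (∀ i, u i ≠ x) → D x = C x) :
    TracedStep P (.rdz a (u ∘ procs)) C D := by
  obtain ⟨⟨hinj, hedge, hidle⟩, htrace⟩ := h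
  have hidle' : ∀ x, (∀ j, u (procs j) ≠ x) → D x = C x := by
    intro x hx
    by_cases hxu : ∃ i, u i = x
    · obtain ⟨i, rfl⟩ := hxu
      have hi : ∀ j, procs j ≠ i := fun j hj => hx j (congrArg u hj)
      have htr := htrace i
      rw [edgeAt_rdz_of_forall_ne hi, Option.toList_none, List.append_nil] at htr
      exact Prod.ext (hidle i hi) htr
    · push Not at hxu
      exact hout x hxu
  refine ⟨⟨hu.comp hinj, hedge, fun x hx => congrArg Prod.fst (hidle' x hx)⟩, fun x => ?_⟩
  by_cases hxu : ∃ i, u i = x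
  · obtain ⟨i, rfl⟩ := hxu
    refine (htrace i).trans ?_
    exact congrArg (((C ∘ u) i).2 ++ Option.toList ·)
      (edgeAt_rdz_comp hu hinj (fun x => (C x).1) (fun x => (D x).1) a i).symm
  · push Not at hxu
    have hx : ∀ j, u (procs j) ≠ x := fun j => hxu _
    simp [hidle' x hx, edgeAt_rdz_of_forall_ne (procs := u ∘ procs) hx]

theorem Relation.ReflTransGen.rdzStep_sumElim_left {ι ι' : Type} {c d : ι → TracedState k A S}
    (h : ReflTransGen (RdzStep P) c d) (e : ι' → TracedState k A S) :
    ReflTransGen (RdzStep P) (Sum.elim c e) (Sum.elim d e) :=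
  h.lift (fun c => Sum.elim c e) fun _ _ ⟨a, _, hs⟩ =>
    ⟨a, _, hs.embed_rdz Sum.inl_injective fun
      | .inl x, hx => absurd rfl (hx x)
      | .inr _, _ => rfl⟩

theorem Relation.ReflTransGen.rdzStep_sumElim_right {ι ι' : Type}
    {c d : ι' → TracedState k A S}
    (h : ReflTransGen (RdzStep P) c d) (e : ι → TracedState k A S) :
    ReflTransGen (RdzStep P) (Sum.elim e c) (Sum.elim e d) :=
  h.lift (fun c => Sum.elim e c) fun _ _ ⟨a, _, hs⟩ =>
    ⟨a, _, hs.embed_rdz Sum.inr_injective fun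
      | .inl _, _ => rfl
      | .inr x, hx => absurd rfl (hx x)⟩

theorem Relation.ReflTransGen.rdzStep_comp_equiv {ι ι' : Type} {c d : ι → TracedState k A S}
    (h : ReflTransGen (RdzStep P) c d) (e : ι' ≃ ι) :
    ReflTransGen (RdzStep P) (c ∘ e) (d ∘ e) :=
  h.lift (· ∘ e) fun c d ⟨a, _, hs⟩ => by
    have hcomp : ∀ f : ι → TracedState k A S, (f ∘ e) ∘ e.symm = f := fun f => by
      rw [Function.comp_assoc, e.self_comp_symm, Function.comp_id]
    rw [← hcomp c, ← hcomp d] at hs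
    exact ⟨a, _, hs.embed_rdz e.symm.injective fun x hx => absurd (e.symm_apply_apply x) (hx _)⟩

theorem TracedReach.tail {ι : Type} {j : ℕ} {c d : ι → TracedState k A S}
    (h : TracedReach P j c) (hs : RdzStep P c d) : TracedReach P j d := by
  cases j with
  | zero =>
    obtain ⟨c₀, hinit, hstar⟩ := h
    exact ⟨c₀, hinit, hstar.tail hs⟩
  | succ j =>
    obtain ⟨c₁, c₂, h₁, hb, hstar⟩ := h
    exact ⟨c₁, c₂, h₁, hb, hstar.tail hs⟩

theorem TracedReach.bcast {ι : Type} {j : ℕ} {c d : ι → TracedState k A S}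
    (h : TracedReach P j c) (hb : TracedStep P .bcast c d) : TracedReach P (j + 1) d :=
  ⟨c, d, h, hb, .refl⟩

theorem TracedReach.of_isEmpty {ι : Type} [IsEmpty ι] (c : ι → TracedState k A S) :
    ∀ j, TracedReach P j c
  | 0 => ⟨c, isEmptyElim, .refl⟩
  | j + 1 => (TracedReach.of_isEmpty c j).bcast (tracedStep_bcast_iff.mpr isEmptyElim)

theorem TracedReach.sumElim {ι ι' : Type} :
    ∀ {j : ℕ} {c : ι → TracedState k A S} {c' : ι' → TracedState k A S},
      TracedReach P j c → TracedReach P j c' → TracedReach P j (Sum.elim c c')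
  | 0, _, _, ⟨c₀, hinit, hstar⟩, ⟨c₀', hinit', hstar'⟩ =>
    ⟨Sum.elim c₀ c₀', fun | .inl i => hinit i | .inr i => hinit' i,
      (hstar.rdzStep_sumElim_left c₀').trans (hstar'.rdzStep_sumElim_right _)⟩
  | _ + 1, _, _, ⟨c₁, c₂, h₁, hb, hstar⟩, ⟨c₁', c₂', h₁', hb', hstar'⟩ =>
    ⟨Sum.elim c₁ c₁', Sum.elim c₂ c₂', h₁.sumElim h₁',
      tracedStep_bcast_iff.mpr fun
        | .inl i => tracedStep_bcast_iff.mp hb i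
        | .inr i => tracedStep_bcast_iff.mp hb' i,
      (hstar.rdzStep_sumElim_left c₂').trans (hstar'.rdzStep_sumElim_right _)⟩

theorem TracedReach.comp_equiv {ι ι' : Type} (e : ι' ≃ ι) :
    ∀ {j : ℕ} {c : ι → TracedState k A S}, TracedReach P j c → TracedReach P j (c ∘ e)
  | 0, _, ⟨c₀, hinit, hstar⟩ =>
    ⟨c₀ ∘ e, fun i => hinit (e i), hstar.rdzStep_comp_equiv e⟩
  | _ + 1, _, ⟨c₁, c₂, h₁, hb, hstar⟩ =>
    ⟨c₁ ∘ e, c₂ ∘ e, h₁.comp_equiv e, tracedStep_bcast_iff.mpr fun i =>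
      tracedStep_bcast_iff.mp hb (e i), hstar.rdzStep_comp_equiv e⟩

theorem exists_rdzStep {ι : Type} (c : ι → TracedState k A S) {pr : Fin k → ι}
    (hpr : Function.Injective pr) {a : A} (t : Fin k → S)
    (he : ∀ l, ((c (pr l)).1, Sum.inl (a, l), t l) ∈ P.R) :
    ∃ d, RdzStep P c d ∧
      ∀ l, d (pr l) = (t l, (c (pr l)).2 ++ [((c (pr l)).1, Sum.inl (a, l), t l)]) := by
  let fired l : TracedState k A S := (t l, (c (pr l)).2 ++ [((c (pr l)).1, Sum.inl (a, l), t l)])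
  let d := Function.extend pr fired c
  have hd : ∀ l, d (pr l) = fired l := hpr.extend_apply _ _
  have hidle : ∀ x, (∀ l, pr l ≠ x) → d x = c x := fun x hx =>
    Function.extend_apply' _ _ _ fun ⟨l, hl⟩ => hx l hl
  have htrans : RBTrans P (fun i => (c i).1) (.rdz a pr) (fun i => (d i).1) :=
    ⟨hpr, fun l => by simpa [hd] using he l, fun x hx => by simp [hidle x hx]⟩
  refine ⟨d, ⟨a, pr, htrans, fun x => ?_⟩, hd⟩
  by_cases hx : ∃ l, pr l = x
  · obtain ⟨l, rfl⟩ := hx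
    rw [edgeAt_rdz_of_eq hpr rfl, hd]
    rfl
  · push Not at hx
    simp [edgeAt_rdz_of_forall_ne hx, hidle x hx]

variable (P) in
def Coverable (j : ℕ) (x : TracedState k A S) : Prop :=
  ∃ (ι : Type) (_ : Finite ι) (c : ι → TracedState k A S) (i : ι),
    TracedReach P j c ∧ c i = x

theorem Coverable.of_mem_initial {s : S} (hs : s ∈ P.I) : Coverable P 0 (s, []) :=
  ⟨Unit, inferInstance, fun _ => (s, []), (), ⟨_, fun _ => ⟨hs, rfl⟩, .refl⟩, rfl⟩

theorem Coverable.exists_family {j : ℕ} : ∀ {n : ℕ} (v : Fin n → TracedState k A S),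
    (∀ l, Coverable P j (v l)) →
    ∃ (ι : Type) (_ : Finite ι) (c : ι → TracedState k A S) (pr : Fin n → ι),
      Function.Injective pr ∧ TracedReach P j c ∧ ∀ l, c (pr l) = v l
  | 0, _, _ => ⟨Empty, inferInstance, Empty.elim, Fin.elim0, fun l => l.elim0,
      .of_isEmpty _ j, fun l => l.elim0⟩
  | n + 1, v, hv => by
    obtain ⟨ι₁, _, c₁, i₁, h₁, hc₁⟩ := hv 0
    obtain ⟨ι₂, _, c₂, pr, hpr, h₂, hc₂⟩ :=
      exists_family (fun l => v l.succ) fun l => hv l.succ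
    refine ⟨ι₁ ⊕ ι₂, inferInstance, Sum.elim c₁ c₂, Fin.cons (.inl i₁) (Sum.inr ∘ pr),
      Fin.cons_injective_iff.mpr ⟨by simp, Sum.inr_injective.comp hpr⟩, h₁.sumElim h₂,
      Fin.cases (by simpa using hc₁) fun l => by simpa using hc₂ l⟩

theorem Coverable.rdz {j : ℕ} {v : Fin k → TracedState k A S} (hv : ∀ l, Coverable P j (v l))
    {a : A} (t : Fin k → S) (he : ∀ l, ((v l).1, Sum.inl (a, l), t l) ∈ P.R) (l : Fin k) :
    Coverable P j (t l, (v l).2 ++ [((v l).1, Sum.inl (a, l), t l)]) := by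
  obtain ⟨ι, _, c, pr, hpr, hc, hcv⟩ := exists_family v hv
  obtain ⟨d, hs, hd⟩ := exists_rdzStep c hpr t fun l => hcv l ▸ he l
  exact ⟨ι, inferInstance, d, pr l, hc.tail hs, by rw [hd, hcv]⟩

theorem Coverable.rdz_of_partners {j : ℕ} {s t : S} {w : List (EdgeT k A S)} {a : A} {h : Fin k}
    (hs : Coverable P j (s, w)) (he : (s, Sum.inl (a, h), t) ∈ P.R)
    (hpart : ∀ l, ∃ s' t', (∃ w', Coverable P j (s', w')) ∧
      (s', Sum.inl (a, l), t') ∈ P.R) :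
    Coverable P j (t, w ++ [(s, Sum.inl (a, h), t)]) := by
  classical
  choose s' t' hcov he' using hpart
  choose w' hw' using hcov
  have hv : ∀ l, Coverable P j (Function.update (fun l => (s' l, w' l)) h (s, w) l) := by
    intro l
    rcases eq_or_ne l h with rfl | hl
    · simpa using hs
    · simpa [hl] using hw' l
  have hedge : ∀ l, ((Function.update (fun l => (s' l, w' l)) h (s, w) l).1, Sum.inl (a, l),
      Function.update t' h t l) ∈ P.R := by
    intro l
    rcases eq_or_ne l h with rfl | hl
    · simpa using he
    · simpa [hl] using he' l
  simpa using Coverable.rdz hv _ hedge h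

theorem Coverable.bcast (hTot : P.BTotal) {j : ℕ} {s t : S} {w : List (EdgeT k A S)}
    (hs : Coverable P j (s, w)) (he : (s, Sum.inr (), t) ∈ P.R) :
    Coverable P (j + 1) (t, w ++ [(s, Sum.inr (), t)]) := by
  classical
  obtain ⟨ι, _, c, i, hc, hci⟩ := hs
  let next : ι → S := Function.update (fun x => Classical.choose (hTot (c x).1)) i t
  refine ⟨ι, inferInstance, fun x => (next x, (c x).2 ++ [((c x).1, Sum.inr (), next x)]), i,
    hc.bcast (tracedStep_bcast_iff.mpr fun x => ⟨?_, rfl⟩), by simp [next, hci]⟩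
  rcases eq_or_ne x i with rfl | hx
  · simpa [next, hci] using he
  · simpa [next, hx] using Classical.choose_spec (hTot (c x).1)

theorem satClosed_coverable (J : Set S) (j : ℕ) (hJ : ∀ s ∈ J, ∃ w, Coverable P j (s, w)) :
    SatClosed P J {s | ∃ w, Coverable P j (s, w)} :=
  ⟨hJ, fun _ _ _ _ ⟨_, hw⟩ he hpart => ⟨_, hw.rdz_of_partners he hpart⟩⟩

theorem exists_coverable_of_mem_satS (hTot : P.BTotal) {j : ℕ} {s : S}
    (hs : s ∈ SatS P (compI P j)) : ∃ w, Coverable P j (s, w) := by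
  induction j generalizing s with
  | zero =>
    exact satS_subset_of_satClosed
      (satClosed_coverable _ 0 fun _ hs => ⟨[], .of_mem_initial hs⟩) hs
  | succ j ih =>
    refine satS_subset_of_satClosed (satClosed_coverable _ _ fun t ht => ?_) hs
    obtain ⟨s, hs, he⟩ := ht
    obtain ⟨w, hw⟩ := ih hs
    exact ⟨_, hw.bcast hTot he⟩

end Completeness

section Realization

variable {k : ℕ} {A S ι : Type} {P : RBTemplate k A S}

theorem FinPath.exists_snoc (p : FinPath P ι) {σ : Sync k A ι} {g : ι → S}
    (hv : RBTrans P (p.conf p.len) σ g) :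
    ∃ q : FinPath P ι, q.conf 0 = p.conf 0 ∧ q.conf q.len = g ∧
      ∀ i, q.proj i = p.proj i ++ (edgeAt (p.conf p.len) g σ i).toList := by
  have hvalid : ∀ t < p.len + 1, RBTrans P (Function.update p.conf (p.len + 1) g t)
      (Function.update p.sync p.len σ t) (Function.update p.conf (p.len + 1) g (t + 1)) := by
    intro t ht
    rcases Nat.lt_succ_iff_lt_or_eq.mp ht with ht | rfl
    · simpa [Function.update_of_ne (show t ≠ p.len + 1 by omega),
        Function.update_of_ne (show t ≠ p.len by omega), ht.ne] using p.valid t ht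
    · simpa using hv
  refine ⟨⟨p.len + 1, _, _, hvalid⟩, by simp, by simp, fun i => ?_⟩
  rw [FinPath.proj, List.filterMap_range_succ]
  congr 1
  · refine List.filterMap_congr fun t ht => ?_
    have ht : t < p.len := List.mem_range.mp ht
    simp [Function.update_of_ne (show t ≠ p.len + 1 by omega), ht.ne]
  · simp

def FinPath.Realizes (p : FinPath P ι) (c : ι → TracedState k A S) : Prop :=
  p.IsRun ∧ p.conf p.len = (fun i => (c i).1) ∧ ∀ i, p.proj i = (c i).2

theorem FinPath.Realizes.tracedStep {p : FinPath P ι} {c d : ι → TracedState k A S}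
    {σ : Sync k A ι} (hp : p.Realizes c) (hs : TracedStep P σ c d) :
    ∃ q : FinPath P ι, q.Realizes d := by
  obtain ⟨hrun, hlast, hproj⟩ := hp
  obtain ⟨q, hq0, hqlast, hqproj⟩ := p.exists_snoc (hlast ▸ hs.1)
  refine ⟨q, fun i => hq0 ▸ hrun i, hqlast, fun i => ?_⟩
  rw [hqproj, hs.2 i, hlast, hproj]

theorem FinPath.Realizes.rdzStar {p : FinPath P ι} {c d : ι → TracedState k A S}
    (hp : p.Realizes c) (h : ReflTransGen (RdzStep P) c d) :
    ∃ q : FinPath P ι, q.Realizes d := by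
  induction h with
  | refl => exact ⟨p, hp⟩
  | tail _ hs ih =>
    obtain ⟨q, hq⟩ := ih
    obtain ⟨_, _, hs⟩ := hs
    exact hq.tracedStep hs

theorem TracedReach.exists_realizes {c : ι → TracedState k A S} :
    ∀ {j : ℕ}, TracedReach P j c → ∃ p : FinPath P ι, p.Realizes c
  | 0, ⟨c₀, hinit, hstar⟩ =>
    FinPath.Realizes.rdzStar (p := ⟨0, fun _ i => (c₀ i).1, fun _ => .bcast, by simp⟩)
      ⟨fun i => (hinit i).1, rfl, fun i => (hinit i).2.symm⟩ hstar
  | _ + 1, ⟨_, _, h₁, hb, hstar⟩ =>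
    let ⟨_, hp₁⟩ := h₁.exists_realizes
    let ⟨_, hp₂⟩ := hp₁.tracedStep hb
    hp₂.rdzStar hstar

theorem Coverable.mem_execFin {j : ℕ} {s : S} {w : List (EdgeT k A S)}
    (hc : Coverable P j (s, w)) : w ∈ execFin P := by
  obtain ⟨ι, _, c, i, hc, hci⟩ := hc
  obtain ⟨n, ⟨e₀⟩⟩ := Finite.exists_equiv_fin ι
  obtain ⟨n, rfl⟩ : ∃ n', n = n' + 1 :=
    Nat.exists_eq_succ_of_ne_zero fun hn => (hn ▸ e₀ i).elim0
  let e : Fin (n + 1) ≃ ι := (e₀.trans (Equiv.swap (e₀ i) 0)).symm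
  have he : e 0 = i := by simp [e]
  obtain ⟨p, hrun, hp⟩ := (hc.comp_equiv e).exists_realizes
  exact ⟨n, p, hrun, by simp [hp.2 0, he, hci]⟩

end Realization

section Main

variable {k : ℕ} {A S : Type} {P : RBTemplate k A S} {n₀ m : ℕ}

theorem exists_coverable_of_mem_eval (hTot : P.BTotal) (hL : IsLasso P n₀ m)
    (w : List (EdgeT k A S)) :
    ∀ q ∈ (APfin P n₀ m).eval w, ∃ j, compI P q.2 = compI P j ∧ Coverable P j (q.1, w) := by
  induction w using List.reverseRecOn with
  | nil =>
    rintro ⟨s, i⟩ ⟨hs, rfl : i = 0⟩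
    exact ⟨0, rfl, .of_mem_initial hs⟩
  | append_singleton w e ih =>
    obtain ⟨e₁, σ, e₂⟩ := e
    intro q hq
    rw [NFA.eval_append_singleton, NFA.mem_stepSet] at hq
    obtain ⟨q₀, hq₀, hR, rfl, rfl⟩ := hq
    obtain ⟨j, hj, hcov⟩ := ih q₀ hq₀
    rcases hR with ⟨s, t, ς, i, -, heq, hsat⟩ | ⟨s, t, i, -, heq, -, hedge⟩
    · simp only [Prod.mk.injEq] at heq
      obtain ⟨rfl, rfl, rfl⟩ := heq
      obtain ⟨_, a, h, _, heq, -, hedge, hpart⟩ := hsat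
      simp only [Prod.mk.injEq, Sum.inl.injEq] at heq
      obtain ⟨rfl, rfl, rfl⟩ := heq
      refine ⟨j, hj, hcov.rdz_of_partners hedge fun l => ?_⟩
      obtain ⟨s', t', hs', he'⟩ := hpart l
      exact ⟨s', t', exists_coverable_of_mem_satS hTot (hj ▸ hs'), he'⟩
    · simp only [Prod.mk.injEq] at heq
      obtain ⟨rfl, rfl, rfl⟩ := heq
      exact ⟨j + 1, (hL.compI_compAt _).trans (compI_congr_succ hj), hcov.bcast hTot hedge⟩

theorem mem_execFin_of_mem_accepts (hTot : P.BTotal) (hL : IsLasso P n₀ m)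
    {w : List (EdgeT k A S)} (hw : w ∈ (APfin P n₀ m).accepts) : w ∈ execFin P := by
  obtain ⟨q, -, hq⟩ := hw
  obtain ⟨j, -, hc⟩ := exists_coverable_of_mem_eval hTot hL w q hq
  exact hc.mem_execFin

theorem accepts_APfin_isRegular [Finite S] (hnm : n₀ ≤ m) :
    (APfin P n₀ m).accepts.IsRegular := by
  refine NFA.accepts_isRegular_of_finite _ (T := {q | q.2 ≤ m})
    (Set.finite_univ.prod (Set.finite_Iic m) |>.subset fun q hq => ⟨trivial, hq⟩)
    (fun q hq => hq.2.le.trans (Nat.zero_le m)) fun q e q' hq' => ?_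
  rcases hq'.1 with ⟨_, _, _, i, hi, heq, -⟩ | ⟨_, _, i, -, heq, -⟩
  · simp only [Prod.mk.injEq] at heq
    obtain ⟨-, -, rfl⟩ := heq
    exact hi
  · simp only [Prod.mk.injEq] at heq
    obtain ⟨-, -, rfl⟩ := heq
    exact compAt_le hnm _

end Main

theorem execFin_regular_general
    {k : ℕ} {A S : Type} [Fintype S]
    (P : RBTemplate k A S) (hTot : P.BTotal)
    (n₀ m : ℕ) (hL : IsLasso P n₀ m) :
    (∀ w : List (EdgeT k A S), w ∈ (APfin P n₀ m).accepts ↔ w ∈ execFin P) ∧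
    Language.IsRegular (execFin P : Language (EdgeT k A S)) ∧
    Nat.card {x : S × ℕ // x.2 ≤ m ∧ x.1 ∈ SatS P (compI P x.2)} ≤
      Fintype.card S * 2 ^ Fintype.card S := by
  have hiff : ∀ w, w ∈ (APfin P n₀ m).accepts ↔ w ∈ execFin P :=
    fun _ => ⟨mem_execFin_of_mem_accepts hTot hL, mem_accepts_of_mem_execFin hL⟩
  have hlang : (execFin P : Language (EdgeT k A S)) = (APfin P n₀ m).accepts :=
    Set.ext fun w => (hiff w).symm
  exact ⟨hiff, hlang ▸ accepts_APfin_isRegular hL.1, unwind_states_card_le hL⟩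

/-- The set of finite executions of the RB-system induced by `P` is
a regular language over the alphabet of edges of `P`: it is recognized by the NFA
`A_P^fin`, whose state set `S^⊸` has at most `|S| · 2^|S|` elements. -/
theorem execFin_regular
    {k : ℕ} {A S : Type} [Fintype A] [Fintype S] (hk : 2 ≤ k)
    (P : RBTemplate k A S) (hTot : P.BTotal) (hU : P.UniqLab)
    (n₀ m : ℕ) (hL : IsLasso P n₀ m) :
    (∀ w : List (EdgeT k A S), w ∈ (APfin P n₀ m).accepts ↔ w ∈ execFin P) ∧
    Language.IsRegular (execFin P : Language (EdgeT k A S)) ∧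
    Nat.card {x : S × ℕ // x.2 ≤ m ∧ x.1 ∈ SatS P (compI P x.2)} ≤
      Fintype.card S * 2 ^ Fintype.card S :=
  execFin_regular_general P hTot n₀ m hL
end

section
/- (Pseudo-cycle pumping) Let P be an RB-template, and let π = t_1 … t_m be a pseudo-cycle of the system P^n, i.e., a finite nonempty path whose initial configuration f and final configuration f' are twins. Then there is an infinite path π' = t'_1 t'_2 … of P^n starting at f such that for every q ≥ 0 and every i ∈ {1,…,m}, the action of t'_{qm+i} equals the action of t_i (where the action of a broadcast transition is 𝔟 and the action of a rendezvous transition with synchronization tuple ((i_1,a_1),…,(i_k,a_k)) is a). -/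
/-! ### Pseudo-cycles (twins) -/

/-- Two configurations are twins if they have the same number of processes in each state. -/
def Twins {S ι : Type} (f g : ι → S) : Prop :=
  ∀ s : S, Nat.card {i : ι // f i = s} = Nat.card {i : ι // g i = s}

/-- A pseudo-cycle: a finite nonempty path whose initial and final configurations are twins. -/
def FinPath.IsPseudoCycle {k : ℕ} {A S : Type} {P : RBTemplate k A S} {ι : Type}
    (p : FinPath P ι) : Prop :=
  0 < p.len ∧ Twins (p.conf 0) (p.conf p.len)

/-- The action taken in a transition: `none` for the broadcast `𝔟`,
`some a` for a rendezvous on action `a`. -/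
def Sync.actn {k : ℕ} {A ι : Type} (σ : Sync k A ι) : Option A :=
  match σ with
  | .bcast => none
  | .rdz a _ => some a

/-! Twins differ by a permutation `e` of the processes, and relabelling processes maps paths to
paths with the same actions. So after one traversal of the pseudo-cycle we are at the initial
configuration relabelled by `e`, and the `q`-th traversal can be replayed with the processes
relabelled by `e ^ q`. -/

def Sync.map {k : ℕ} {A ι κ : Type} (φ : ι → κ) : Sync k A ι → Sync k A κ
  | .bcast => .bcast
  | .rdz a procs => .rdz a (φ ∘ procs)

@[simp]
lemma Sync.actn_map {k : ℕ} {A ι κ : Type} (φ : ι → κ) (σ : Sync k A ι) :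
    (σ.map φ).actn = σ.actn := by
  cases σ <;> rfl

lemma RBTrans.comp_equiv {k : ℕ} {A S ι κ : Type} {P : RBTemplate k A S} {f g : ι → S}
    {σ : Sync k A ι} (h : RBTrans P f σ g) (e : κ ≃ ι) :
    RBTrans P (f ∘ e) (σ.map e.symm) (g ∘ e) := by
  cases σ with
  | bcast => exact fun i => h (e i)
  | rdz a procs =>
    obtain ⟨hinj, hedge, hidle⟩ := h
    refine ⟨e.symm.injective.comp hinj, fun j => by simpa [Sync.map] using hedge j,
      fun i hi => hidle (e i) fun j hj => hi j ?_⟩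
    simp [hj]

lemma Twins.exists_perm {S ι : Type} [Finite ι] {f g : ι → S} (h : Twins f g) :
    ∃ e : Equiv.Perm ι, g = f ∘ e := by
  have fiberEquiv (s : S) : {i // g i = s} ≃ {i // f i = s} :=
    (Finite.equivFinOfCardEq (h s).symm).trans (Finite.equivFin _).symm
  exact ⟨Equiv.ofFiberEquiv fiberEquiv, funext fun i => (Equiv.ofFiberEquiv_map _ i).symm⟩

namespace FinPath

variable {k : ℕ} {A S ι : Type} {P : RBTemplate k A S} (p : FinPath P ι)

def pumpConf (e : Equiv.Perm ι) (t : ℕ) : ι → S :=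
  p.conf (t % p.len) ∘ ⇑(e ^ (t / p.len))

lemma pumpConf_mul_add (hlen : 0 < p.len) (e : Equiv.Perm ι) (he : p.conf p.len = p.conf 0 ∘ e)
    (q : ℕ) {i : ℕ} (hi : i ≤ p.len) : p.pumpConf e (q * p.len + i) = p.conf i ∘ ⇑(e ^ q) := by
  rcases hi.lt_or_eq with hi | rfl
  · rw [pumpConf, Nat.mul_add_mod_self_right, Nat.mod_eq_of_lt hi, Nat.mul_comm,
      Nat.mul_add_div hlen, Nat.div_eq_of_lt hi, Nat.add_zero]
  · rw [← Nat.succ_mul, pumpConf, Nat.mul_mod_left, Nat.mul_div_cancel _ hlen, he, pow_succ',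
      Equiv.Perm.coe_mul, Function.comp_assoc]

def pump (hlen : 0 < p.len) (e : Equiv.Perm ι) (he : p.conf p.len = p.conf 0 ∘ e) :
    InfPath P ι where
  conf := p.pumpConf e
  sync t := (p.sync (t % p.len)).map ⇑(e ^ (t / p.len)).symm
  valid t := by
    have hi : t % p.len < p.len := Nat.mod_lt _ hlen
    have hi' : t % p.len + 1 ≤ p.len := hi
    have hstep := (p.valid _ hi).comp_equiv (e ^ (t / p.len))
    rwa [← p.pumpConf_mul_add hlen e he _ hi.le, ← p.pumpConf_mul_add hlen e he _ hi',
      ← add_assoc, Nat.div_add_mod'] at hstep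

lemma pump_conf_zero (hlen : 0 < p.len) (e : Equiv.Perm ι) (he : p.conf p.len = p.conf 0 ∘ e) :
    (p.pump hlen e he).conf 0 = p.conf 0 := by
  simp [pump, pumpConf]

lemma pump_actn (hlen : 0 < p.len) (e : Equiv.Perm ι) (he : p.conf p.len = p.conf 0 ∘ e)
    (q : ℕ) {i : ℕ} (hi : i < p.len) :
    ((p.pump hlen e he).sync (q * p.len + i)).actn = (p.sync i).actn := by
  simp [pump, Nat.mul_add_mod_self_right, Nat.mod_eq_of_lt hi]

end FinPath

theorem pseudo_cycle_pumping_general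
    {k : ℕ} {A S : Type}
    (P : RBTemplate k A S)
    (n : ℕ) (p : FinPath P (Fin n)) (hpc : p.IsPseudoCycle) :
    ∃ p' : InfPath P (Fin n), p'.conf 0 = p.conf 0 ∧
      ∀ (q i : ℕ), i < p.len →
        (p'.sync (q * p.len + i)).actn = (p.sync i).actn := by
  obtain ⟨hlen, htwins⟩ := hpc
  obtain ⟨e, he⟩ := htwins.exists_perm
  exact ⟨p.pump hlen e he, p.pump_conf_zero hlen e he, fun q _ hi => p.pump_actn hlen e he q hi⟩

/-- **Pseudo-cycle pumping.** A pseudo-cycle `p` of `P^n` can be pumped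
to an infinite path of `P^n`, starting at the initial configuration of `p`, which
repeatedly goes through the actions of `p`. -/
theorem pseudo_cycle_pumping
    {k : ℕ} {A S : Type} [Fintype A] [Fintype S] (hk : 2 ≤ k)
    (P : RBTemplate k A S) (hTot : P.BTotal)
    (n : ℕ) (p : FinPath P (Fin n)) (hpc : p.IsPseudoCycle) :
    ∃ p' : InfPath P (Fin n), p'.conf 0 = p.conf 0 ∧
      ∀ (q i : ℕ), i < p.len →
        (p'.sync (q * p.len + i)).actn = (p.sync i).actn :=
  pseudo_cycle_pumping_general P n p hpc
end
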